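/- Let η = (η₁, η₂) ∈ [−π, π]², let U be an open set with cl(ϖ) ∩ Ω ⊆ U ⊆ Ω, and let g be analytic on U satisfying the quasiperiodic boundary conditions g(1 + iy) = e^{iη₁} g(iy) for every y ∈ (0,1) such that iy ∈ Ω and 1 + iy ∈ Ω, and g(x + i) = e^{iη₂} g(x) for every x ∈ (0,1) such that x ∈ Ω and x + i ∈ Ω. Then there exists a function G analytic on Ω such that G(z + m) = e^{i(η₁ m₁ + η₂ m₂)} g(z) for every m ∈ Λ and every z ∈ ϖ. -/

import Mathlib

open Complex MeasureTheory Set Filter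

noncomputable section

/-- The Gaussian integer lattice point associated to a pair of integers. -/
def latPt (p : ℤ × ℤ) : ℂ := (p.1 : ℂ) + (p.2 : ℂ) * Complex.I

/-- The open unit square `Q = (0,1) × (0,1)` in `ℂ`. -/
def QSet : Set ℂ := {z : ℂ | z.re ∈ Set.Ioo (0:ℝ) 1 ∧ z.im ∈ Set.Ioo (0:ℝ) 1}

/-- The set `S + Λ` of all translates of points of `S` by lattice points. -/
def SLat (S : Finset ℂ) : Set ℂ := {z : ℂ | ∃ s ∈ S, ∃ p : ℤ × ℤ, z = s + latPt p}

/-!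
On the closed cell `m + cl Q` take the branch `z ↦ e^{i(η₁ m₁ + η₂ m₂)} g (z - m)`. The boundary
conditions make the branches of two cells sharing an edge agree on the open edge, hence, by the
identity theorem, near every point of the closed edge; at a corner one passes through a third
cell. The closed cells form a locally finite family, so near `z₀ ∈ Ω` only cells containing `z₀`
occur, and `G`, built from an arbitrary choice of cell at each point, agrees near `z₀` with one
analytic branch. Analyticity of the branches needs `cl Q ∩ Ω ⊆ cl ϖ`, which holds because
`∂Q ⊆ ∂ϖ` and no translate of `cl ϖ` other than `cl ϖ` itself meets `Q`.
-/

open Metric Topology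

@[simp] lemma latPt_re (p : ℤ × ℤ) : (latPt p).re = p.1 := by simp [latPt]

@[simp] lemma latPt_im (p : ℤ × ℤ) : (latPt p).im = p.2 := by simp [latPt]

lemma latPt_add (p q : ℤ × ℤ) : latPt (p + q) = latPt p + latPt q := by
  simp only [latPt, Prod.fst_add, Prod.snd_add]; push_cast; ring

lemma latPt_sub (p q : ℤ × ℤ) : latPt (p - q) = latPt p - latPt q := by
  simp only [latPt, Prod.fst_sub, Prod.snd_sub]; push_cast; ring

lemma latPt_neg (p : ℤ × ℤ) : latPt (-p) = -latPt p := by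
  simp only [latPt, Prod.fst_neg, Prod.snd_neg]; push_cast; ring

lemma isOpen_QSet : IsOpen QSet :=
  (isOpen_Ioo.preimage continuous_re).inter (isOpen_Ioo.preimage continuous_im)

lemma mem_closure_QSet {z : ℂ} :
    z ∈ closure QSet ↔ z.re ∈ Icc (0 : ℝ) 1 ∧ z.im ∈ Icc (0 : ℝ) 1 := by
  rw [show QSet = Ioo (0 : ℝ) 1 ×ℂ Ioo (0 : ℝ) 1 from rfl, closure_reProdIm,
    closure_Ioo zero_ne_one]
  rfl

lemma Int.sub_mem_Icc_of_sub_mem_Icc {a : ℝ} {m n : ℤ} (hm : a - m ∈ Icc (0 : ℝ) 1)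
    (hn : a - n ∈ Icc (0 : ℝ) 1) : n - m ∈ Icc (-1 : ℤ) 1 := by
  have h : ((n - m : ℤ) : ℝ) ∈ Icc (-1 : ℝ) 1 := by
    push_cast; constructor <;> linarith [hm.1, hm.2, hn.1, hn.2]
  exact ⟨by exact_mod_cast h.1, by exact_mod_cast h.2⟩

lemma Int.eq_zero_of_sub_mem_Icc {a : ℝ} {m : ℤ} (ha : a ∈ Ioo (0 : ℝ) 1)
    (hm : a - m ∈ Icc (0 : ℝ) 1) : m = 0 := by
  have h₁ : (-1 : ℤ) < m := by exact_mod_cast (show (-1 : ℝ) < m by linarith [ha.1, hm.2])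
  have h₂ : m < 1 := by exact_mod_cast (show (m : ℝ) < 1 by linarith [ha.2, hm.1])
  omega

def closedCell (p : ℤ × ℤ) : Set ℂ := (fun z => z - latPt p) ⁻¹' closure QSet

lemma mem_closedCell {p : ℤ × ℤ} {z : ℂ} :
    z ∈ closedCell p ↔ z.re - p.1 ∈ Icc (0 : ℝ) 1 ∧ z.im - p.2 ∈ Icc (0 : ℝ) 1 := by
  simp [closedCell, mem_closure_QSet]

lemma isClosed_closedCell (p : ℤ × ℤ) : IsClosed (closedCell p) :=
  isClosed_closure.preimage (by fun_prop)

lemma mem_closedCell_floor (z : ℂ) : z ∈ closedCell (⌊z.re⌋, ⌊z.im⌋) := by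
  rw [mem_closedCell, Int.self_sub_floor, Int.self_sub_floor]
  exact ⟨⟨Int.fract_nonneg _, (Int.fract_lt_one _).le⟩, Int.fract_nonneg _, (Int.fract_lt_one _).le⟩

lemma locallyFinite_closedCell : LocallyFinite closedCell := by
  intro z₀
  refine ⟨ball z₀ 1, ball_mem_nhds _ one_pos, ?_⟩
  refine ((finite_Icc ⌈z₀.re - 2⌉ ⌊z₀.re + 1⌋).prod (finite_Icc ⌈z₀.im - 2⌉ ⌊z₀.im + 1⌋)).subset ?_
  rintro p ⟨w, hwp, hw⟩
  rw [mem_closedCell] at hwp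
  have hre := abs_lt.mp ((abs_re_le_norm (w - z₀)).trans_lt (mem_ball_iff_norm.mp hw))
  have him := abs_lt.mp ((abs_im_le_norm (w - z₀)).trans_lt (mem_ball_iff_norm.mp hw))
  simp only [sub_re, sub_im] at hre him
  simp only [mem_prod, ← Int.preimage_Icc, mem_preimage, mem_Icc]
  refine ⟨⟨?_, ?_⟩, ?_, ?_⟩ <;> linarith [hwp.1.1, hwp.1.2, hwp.2.1, hwp.2.2]

lemma sub_mem_Icc_of_mem_closedCell {p q : ℤ × ℤ} {z : ℂ} (hp : z ∈ closedCell p)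
    (hq : z ∈ closedCell q) : q.1 - p.1 ∈ Icc (-1 : ℤ) 1 ∧ q.2 - p.2 ∈ Icc (-1 : ℤ) 1 := by
  rw [mem_closedCell] at hp hq
  exact ⟨Int.sub_mem_Icc_of_sub_mem_Icc hp.1 hq.1, Int.sub_mem_Icc_of_sub_mem_Icc hp.2 hq.2⟩

lemma mem_iUnion_closure_image_add_latPt {S : Set ℂ} {z : ℂ} :
    z ∈ ⋃ p : ℤ × ℤ, closure ((fun w => w + latPt p) '' S) ↔ ∃ p, z - latPt p ∈ closure S := by
  refine mem_iUnion.trans (exists_congr fun p => ?_)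
  rw [← Homeomorph.coe_addRight, ← Homeomorph.image_closure, Homeomorph.image_eq_preimage_symm]
  rfl

lemma sub_mem_interior_of_forall_sub_mem {T : Set ℂ} {c : ℂ} (hT : ∀ w ∈ T, w - c ∈ T)
    {z : ℂ} (hz : z ∈ interior T) : z - c ∈ interior T := by
  have : z ∈ interior (Homeomorph.subRight c ⁻¹' T) := interior_mono hT hz
  rwa [← Homeomorph.preimage_interior] at this

lemma closure_QSet_inter_interior_subset {ϖ : Set ℂ} (hϖQ : ϖ ⊆ QSet)
    (hbdry : frontier QSet ⊆ frontier ϖ) :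
    closure QSet ∩ interior (⋃ p : ℤ × ℤ, closure ((fun z => z + latPt p) '' ϖ)) ⊆
      closure ϖ := by
  rintro z ⟨hzQ, hzΩ⟩
  by_cases hz : z ∈ QSet
  · obtain ⟨p, hp⟩ := mem_iUnion_closure_image_add_latPt.mp (interior_subset hzΩ)
    have hpQ := mem_closure_QSet.mp (closure_mono hϖQ hp)
    simp only [sub_re, sub_im, latPt_re, latPt_im] at hpQ
    obtain rfl : p = 0 :=
      Prod.ext (Int.eq_zero_of_sub_mem_Icc hz.1 hpQ.1) (Int.eq_zero_of_sub_mem_Icc hz.2 hpQ.2)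
    simpa [latPt] using hp
  · exact frontier_subset_closure (hbdry (isOpen_QSet.frontier_eq ▸ ⟨hzQ, hz⟩))

lemma AnalyticAt.eventuallyEq_of_eq_along_line {f₁ f₂ : ℂ → ℂ} {c v : ℂ} {s : Set ℝ}
    {y₀ : ℝ} (h₁ : AnalyticAt ℂ f₁ (c + v * y₀)) (h₂ : AnalyticAt ℂ f₂ (c + v * y₀))
    (hv : v ≠ 0) (hs : IsOpen s) (hy₀ : y₀ ∈ closure s)
    (h : ∀ᶠ y in 𝓝 y₀, y ∈ s → f₁ (c + v * y) = f₂ (c + v * y)) :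
    f₁ =ᶠ[𝓝 (c + v * y₀)] f₂ := by
  have hacc : AccPt y₀ (𝓟 s) := by
    rw [← mem_derivedSet, ← derivedSet_closure]
    exact hs.perfect_closure.acc _ hy₀
  have hline : Tendsto (fun y : ℝ => c + v * y) (𝓝[≠] y₀) (𝓝[≠] (c + v * y₀)) := by
    refine tendsto_nhdsWithin_of_tendsto_nhds_of_eventually_within _
      ((Continuous.tendsto (by fun_prop) y₀).mono_left nhdsWithin_le_nhds) ?_
    filter_upwards [self_mem_nhdsWithin] with y hy
    simpa [hv] using hy
  refine (h₁.frequently_eq_iff_eventually_eq h₂).mp ?_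
  exact hline.frequently ((accPt_iff_frequently_nhdsNE.mp hacc).mp (nhdsWithin_le_nhds h))

def floquetFactor (η : ℝ × ℝ) (p : ℤ × ℤ) : ℂ :=
  exp (I * ofReal (η.1 * (latPt p).re + η.2 * (latPt p).im))

lemma floquetFactor_add (η : ℝ × ℝ) (p q : ℤ × ℤ) :
    floquetFactor η (p + q) = floquetFactor η p * floquetFactor η q := by
  simp only [floquetFactor, ← exp_add, latPt_re, latPt_im, Prod.fst_add, Prod.snd_add]
  push_cast
  ring_nf

def floquetBranch (η : ℝ × ℝ) (g : ℂ → ℂ) (p : ℤ × ℤ) (z : ℂ) : ℂ :=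
  floquetFactor η p * g (z - latPt p)

lemma AnalyticAt.floquetBranch {η : ℝ × ℝ} {g : ℂ → ℂ} {p : ℤ × ℤ} {z : ℂ}
    (hg : AnalyticAt ℂ g (z - latPt p)) : AnalyticAt ℂ (floquetBranch η g p) z :=
  analyticAt_const.mul (hg.fun_comp (f := fun w => w - latPt p) (by fun_prop))

def floquetExtension (η : ℝ × ℝ) (g : ℂ → ℂ) (z : ℂ) : ℂ :=
  floquetBranch η g (⌊z.re⌋, ⌊z.im⌋) z

structure IsFloquetCellFunction (Ω : Set ℂ) (η : ℝ × ℝ) (g : ℂ → ℂ) : Prop where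
  isOpen : IsOpen Ω
  sub_latPt_mem : ∀ p : ℤ × ℤ, ∀ z ∈ Ω, z - latPt p ∈ Ω
  analyticOnNhd : AnalyticOnNhd ℂ g (closure QSet ∩ Ω)
  quasiperiodic_re : ∀ y ∈ Ioo (0:ℝ) 1, I * (y:ℂ) ∈ Ω → 1 + I * (y:ℂ) ∈ Ω →
    g (1 + I * (y:ℂ)) = exp (I * ofReal η.1) * g (I * (y:ℂ))
  quasiperiodic_im : ∀ x ∈ Ioo (0:ℝ) 1, (x:ℂ) ∈ Ω → (x:ℂ) + I ∈ Ω →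
    g ((x:ℂ) + I) = exp (I * ofReal η.2) * g (x:ℂ)

namespace IsFloquetCellFunction

variable {Ω : Set ℂ} {η : ℝ × ℝ} {g : ℂ → ℂ}

lemma analyticAt_floquetBranch (hg : IsFloquetCellFunction Ω η g) {p : ℤ × ℤ} {z : ℂ}
    (hz : z ∈ Ω) (hp : z ∈ closedCell p) : AnalyticAt ℂ (floquetBranch η g p) z :=
  (hg.analyticOnNhd _ ⟨hp, hg.sub_latPt_mem p z hz⟩).floquetBranch

/-- The cells `p` and `p + e` share the edge `latPt (p + e) + v * [0, 1]`, across which `hbc`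
is the boundary condition. -/
lemma floquetBranch_eventuallyEq_add (hg : IsFloquetCellFunction Ω η g) (e : ℤ × ℤ) {v : ℂ}
    (hv : v ≠ 0) (hbc : ∀ y ∈ Ioo (0:ℝ) 1, v * y ∈ Ω → latPt e + v * y ∈ Ω →
      g (latPt e + v * y) = floquetFactor η e * g (v * y))
    {p : ℤ × ℤ} {z₀ : ℂ} {y₀ : ℝ} (hz₀ : z₀ ∈ Ω) (hp : z₀ ∈ closedCell p)
    (hpe : z₀ ∈ closedCell (p + e)) (hy₀ : y₀ ∈ Icc (0:ℝ) 1)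
    (hedge : z₀ - latPt (p + e) = v * y₀) :
    floquetBranch η g p =ᶠ[𝓝 z₀] floquetBranch η g (p + e) := by
  obtain rfl : z₀ = latPt (p + e) + v * y₀ := by rw [← hedge]; ring
  refine (hg.analyticAt_floquetBranch hz₀ hp).eventuallyEq_of_eq_along_line
    (hg.analyticAt_floquetBranch hz₀ hpe) hv isOpen_Ioo (by rwa [closure_Ioo zero_ne_one]) ?_
  have hline : Tendsto (fun y : ℝ => latPt (p + e) + v * y) (𝓝 y₀) (𝓝 (latPt (p + e) + v * y₀)) :=
    Continuous.tendsto (by fun_prop) y₀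
  filter_upwards [hline (hg.isOpen.mem_nhds hz₀)] with y hyΩ hy
  have hpe' : latPt (p + e) + v * y - latPt (p + e) = v * y := by ring
  have hp' : latPt (p + e) + v * y - latPt p = latPt e + v * y := by rw [latPt_add]; ring
  have h₁ : v * y ∈ Ω := hpe' ▸ hg.sub_latPt_mem (p + e) _ hyΩ
  have h₂ : latPt e + v * y ∈ Ω := hp' ▸ hg.sub_latPt_mem p _ hyΩ
  simp only [floquetBranch, hpe', hp', hbc y hy h₁ h₂, floquetFactor_add, mul_assoc]

lemma floquetBranch_eventuallyEq_add_one_zero (hg : IsFloquetCellFunction Ω η g) {p : ℤ × ℤ}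
    {z₀ : ℂ} (hz₀ : z₀ ∈ Ω) (hp : z₀ ∈ closedCell p) (hq : z₀ ∈ closedCell (p + (1, 0))) :
    floquetBranch η g p =ᶠ[𝓝 z₀] floquetBranch η g (p + (1, 0)) := by
  have hp' := mem_closedCell.mp hp
  have hq' := mem_closedCell.mp hq
  simp only [Prod.fst_add, Prod.snd_add, Int.cast_add, Int.cast_one, add_zero] at hq'
  refine hg.floquetBranch_eventuallyEq_add (1, 0) I_ne_zero (fun y hy h₁ h₂ => ?_) hz₀ hp hq hq'.2
    (Complex.ext ?_ ?_)
  · simpa [latPt, floquetFactor] using hg.quasiperiodic_re y hy h₁ (by simpa [latPt] using h₂)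
  · simp only [sub_re, latPt_re, mul_re, I_re, I_im, ofReal_re, ofReal_im, Prod.fst_add]
    push_cast
    linarith [hp'.1.2, hq'.1.1]
  · simp [latPt]

lemma floquetBranch_eventuallyEq_add_zero_one (hg : IsFloquetCellFunction Ω η g) {p : ℤ × ℤ}
    {z₀ : ℂ} (hz₀ : z₀ ∈ Ω) (hp : z₀ ∈ closedCell p) (hq : z₀ ∈ closedCell (p + (0, 1))) :
    floquetBranch η g p =ᶠ[𝓝 z₀] floquetBranch η g (p + (0, 1)) := by
  have hp' := mem_closedCell.mp hp
  have hq' := mem_closedCell.mp hq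
  simp only [Prod.fst_add, Prod.snd_add, Int.cast_add, Int.cast_one, add_zero] at hq'
  refine hg.floquetBranch_eventuallyEq_add (0, 1) one_ne_zero (fun x hx h₁ h₂ => ?_) hz₀ hp hq
    hq'.1 (Complex.ext ?_ ?_)
  · simpa [latPt, floquetFactor, add_comm] using
      hg.quasiperiodic_im x hx (by simpa using h₁) (by simpa [latPt, add_comm] using h₂)
  · simp [latPt]
  · simp only [sub_im, latPt_im, one_mul, ofReal_im, Prod.snd_add]
    push_cast
    linarith [hp'.2.2, hq'.2.1]

lemma floquetBranch_eventuallyEq_of_snd_eq (hg : IsFloquetCellFunction Ω η g) {p q : ℤ × ℤ}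
    {z₀ : ℂ} (hz₀ : z₀ ∈ Ω) (hp : z₀ ∈ closedCell p) (hq : z₀ ∈ closedCell q)
    (hpq : p.2 = q.2) : floquetBranch η g p =ᶠ[𝓝 z₀] floquetBranch η g q := by
  have h := (sub_mem_Icc_of_mem_closedCell hp hq).1
  obtain rfl | rfl | rfl : q = p + (1, 0) ∨ p = q + (1, 0) ∨ q = p := by
    simp only [Prod.ext_iff, Prod.fst_add, Prod.snd_add, mem_Icc] at h ⊢
    omega
  · exact hg.floquetBranch_eventuallyEq_add_one_zero hz₀ hp hq
  · exact (hg.floquetBranch_eventuallyEq_add_one_zero hz₀ hq hp).symm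
  · rfl

lemma floquetBranch_eventuallyEq_of_fst_eq (hg : IsFloquetCellFunction Ω η g) {p q : ℤ × ℤ}
    {z₀ : ℂ} (hz₀ : z₀ ∈ Ω) (hp : z₀ ∈ closedCell p) (hq : z₀ ∈ closedCell q)
    (hpq : p.1 = q.1) : floquetBranch η g p =ᶠ[𝓝 z₀] floquetBranch η g q := by
  have h := (sub_mem_Icc_of_mem_closedCell hp hq).2
  obtain rfl | rfl | rfl : q = p + (0, 1) ∨ p = q + (0, 1) ∨ q = p := by
    simp only [Prod.ext_iff, Prod.fst_add, Prod.snd_add, mem_Icc] at h ⊢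
    omega
  · exact hg.floquetBranch_eventuallyEq_add_zero_one hz₀ hp hq
  · exact (hg.floquetBranch_eventuallyEq_add_zero_one hz₀ hq hp).symm
  · rfl

/-- Any two cells containing `z₀` are joined through the cell `(q.1, p.2)`, which also
contains `z₀`, by one horizontal and one vertical step. -/
lemma floquetBranch_eventuallyEq (hg : IsFloquetCellFunction Ω η g) {p q : ℤ × ℤ} {z₀ : ℂ}
    (hz₀ : z₀ ∈ Ω) (hp : z₀ ∈ closedCell p) (hq : z₀ ∈ closedCell q) :
    floquetBranch η g p =ᶠ[𝓝 z₀] floquetBranch η g q := by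
  have hm : z₀ ∈ closedCell (q.1, p.2) :=
    mem_closedCell.mpr ⟨(mem_closedCell.mp hq).1, (mem_closedCell.mp hp).2⟩
  exact (hg.floquetBranch_eventuallyEq_of_snd_eq hz₀ hp hm rfl).trans
    (hg.floquetBranch_eventuallyEq_of_fst_eq hz₀ hm hq rfl)

lemma floquetExtension_eventuallyEq (hg : IsFloquetCellFunction Ω η g) {p : ℤ × ℤ} {z₀ : ℂ}
    (hz₀ : z₀ ∈ Ω) (hp : z₀ ∈ closedCell p) :
    floquetExtension η g =ᶠ[𝓝 z₀] floquetBranch η g p := by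
  have hnear := (locallyFinite_closedCell.point_finite z₀).eventually_all.mpr
    fun q hq => hg.floquetBranch_eventuallyEq hz₀ hq hp
  filter_upwards [locallyFinite_closedCell.eventually_subset isClosed_closedCell z₀, hnear]
    with w hsub heq
  exact heq _ (hsub (mem_closedCell_floor w))

lemma analyticOnNhd_floquetExtension (hg : IsFloquetCellFunction Ω η g) :
    AnalyticOnNhd ℂ (floquetExtension η g) Ω := fun z hz =>
  (hg.analyticAt_floquetBranch hz (mem_closedCell_floor z)).congr
    (hg.floquetExtension_eventuallyEq hz (mem_closedCell_floor z)).symm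

lemma floquetExtension_add_latPt (hg : IsFloquetCellFunction Ω η g) (p : ℤ × ℤ) {z : ℂ}
    (hz : z ∈ QSet) (hzp : z + latPt p ∈ Ω) :
    floquetExtension η g (z + latPt p) = floquetFactor η p * g z := by
  have hcell : z + latPt p ∈ closedCell p := by simpa [closedCell] using subset_closure hz
  rw [(hg.floquetExtension_eventuallyEq hzp hcell).self_of_nhds, floquetBranch,
    add_sub_cancel_right]

end IsFloquetCellFunction

theorem stmt13_general
    (ϖ : Set ℂ) (hϖopen : IsOpen ϖ) (hϖQ : ϖ ⊆ QSet)
    (hbdry : frontier QSet ⊆ frontier ϖ)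
    (Ω : Set ℂ)
    (hΩ : Ω = interior (⋃ p : ℤ × ℤ, closure ((fun z => z + latPt p) '' ϖ)))
    (η : ℝ × ℝ)
    (U : Set ℂ) (hU1 : closure ϖ ∩ Ω ⊆ U)
    (g : ℂ → ℂ) (hg : AnalyticOnNhd ℂ g U)
    (hbc1 : ∀ y ∈ Set.Ioo (0:ℝ) 1, Complex.I * (y:ℂ) ∈ Ω → 1 + Complex.I * (y:ℂ) ∈ Ω →
      g (1 + Complex.I * (y:ℂ)) = Complex.exp (Complex.I * Complex.ofReal η.1) *
        g (Complex.I * (y:ℂ)))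
    (hbc2 : ∀ x ∈ Set.Ioo (0:ℝ) 1, (x:ℂ) ∈ Ω → (x:ℂ) + Complex.I ∈ Ω →
      g ((x:ℂ) + Complex.I) = Complex.exp (Complex.I * Complex.ofReal η.2) * g (x:ℂ)) :
    ∃ G : ℂ → ℂ, AnalyticOnNhd ℂ G Ω ∧
      ∀ p : ℤ × ℤ, ∀ z ∈ ϖ,
        G (z + latPt p) = Complex.exp (Complex.I *
          Complex.ofReal (η.1 * (latPt p).re + η.2 * (latPt p).im)) * g z := by
  have hcell : IsFloquetCellFunction Ω η g :=
    { isOpen := hΩ ▸ isOpen_interior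
      sub_latPt_mem := fun p z hz => by
        rw [hΩ] at hz ⊢
        refine sub_mem_interior_of_forall_sub_mem (fun w hw => ?_) hz
        obtain ⟨q, hq⟩ := mem_iUnion_closure_image_add_latPt.mp hw
        exact mem_iUnion_closure_image_add_latPt.mpr
          ⟨q - p, by rwa [latPt_sub, sub_sub_sub_cancel_right]⟩
      analyticOnNhd := hg.mono fun z hz =>
        hU1 ⟨closure_QSet_inter_interior_subset hϖQ hbdry (hΩ ▸ hz), hz.2⟩
      quasiperiodic_re := hbc1
      quasiperiodic_im := hbc2 }
  have hϖΩ : ϖ ⊆ Ω := hΩ ▸ interior_maximal (fun z hz =>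
    mem_iUnion_closure_image_add_latPt.mpr ⟨0, by simpa [latPt] using subset_closure hz⟩) hϖopen
  refine ⟨floquetExtension η g, hcell.analyticOnNhd_floquetExtension, fun p z hz => ?_⟩
  exact hcell.floquetExtension_add_latPt p (hϖQ hz)
    (by simpa [latPt_neg] using hcell.sub_latPt_mem (-p) z (hϖΩ hz))

/-- gluing a quasiperiodic analytic function on a neighborhood of the
closed periodic cell into an analytic function on the whole periodic domain `Ω`. -/
theorem stmt13
    (ϖ : Set ℂ) (hϖopen : IsOpen ϖ) (hϖne : ϖ.Nonempty) (hϖQ : ϖ ⊆ QSet)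
    (hbdry : frontier QSet ⊆ frontier ϖ)
    (hcompl : ∃ V : Set ℂ, IsOpen V ∧ V.Nonempty ∧ V ⊆ QSet \ closure ϖ)
    (Ω : Set ℂ)
    (hΩ : Ω = interior (⋃ p : ℤ × ℤ, closure ((fun z => z + latPt p) '' ϖ)))
    (η : ℝ × ℝ) (hη : η ∈ Set.Icc ((-Real.pi, -Real.pi) : ℝ × ℝ) (Real.pi, Real.pi))
    (U : Set ℂ) (hUopen : IsOpen U) (hU1 : closure ϖ ∩ Ω ⊆ U) (hU2 : U ⊆ Ω)
    (g : ℂ → ℂ) (hg : AnalyticOnNhd ℂ g U)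
    (hbc1 : ∀ y ∈ Set.Ioo (0:ℝ) 1, Complex.I * (y:ℂ) ∈ Ω → 1 + Complex.I * (y:ℂ) ∈ Ω →
      g (1 + Complex.I * (y:ℂ)) = Complex.exp (Complex.I * Complex.ofReal η.1) *
        g (Complex.I * (y:ℂ)))
    (hbc2 : ∀ x ∈ Set.Ioo (0:ℝ) 1, (x:ℂ) ∈ Ω → (x:ℂ) + Complex.I ∈ Ω →
      g ((x:ℂ) + Complex.I) = Complex.exp (Complex.I * Complex.ofReal η.2) * g (x:ℂ)) :
    ∃ G : ℂ → ℂ, AnalyticOnNhd ℂ G Ω ∧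
      ∀ p : ℤ × ℤ, ∀ z ∈ ϖ,
        G (z + latPt p) = Complex.exp (Complex.I *
          Complex.ofReal (η.1 * (latPt p).re + η.2 * (latPt p).im)) * g z :=
  stmt13_general ϖ hϖopen hϖQ hbdry Ω hΩ η U hU1 g hg hbc1 hbc2
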